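/- arXiv:1312.5710 — 15 statements merged into one kernel-verified Lean document; each statement's English description precedes it below -/
import Mathlib

section
/- In a pre-Malcev algebra (A, ·), the commutator [x,y] = x·y − y·x satisfies Sagle's identity: [[x,z],[y,t]] = [[[x,y],z],t] + [[[y,z],t],x] + [[[z,t],x],y] + [[[t,x],y],z]. Hence (A,[-,-]) is a Malcev algebra. -/
variable {k A : Type*} [Field k] [CharZero k] [AddCommGroup A] [Module k A]

/-- The pre-Malcev expression `PM(x,y,z,t)` for a bilinear product `m`. -/
def PMe (m : A →ₗ[k] A →ₗ[k] A) (x y z t : A) : A :=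
  m (m y z) (m x t) - m (m z y) (m x t)
  + m (m (m x y) z) t - m (m (m y x) z) t
  - m (m z (m x y)) t + m (m z (m y x)) t
  + m y (m (m x z) t) - m y (m (m z x) t)
  - m x (m y (m z t)) + m z (m x (m y t))

/-- A bilinear product is pre-Malcev if `PM(x,y,z,t) = 0` for all arguments. -/
def PMid (m : A →ₗ[k] A →ₗ[k] A) : Prop := ∀ x y z t : A, PMe m x y z t = 0

/-- A Malcev algebra: anticommutative bilinear product satisfying Sagle's identity. -/
def IsMalcev (b : A →ₗ[k] A →ₗ[k] A) : Prop :=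
  (∀ x y : A, b x y = - b y x) ∧
  (∀ x y z t : A, b (b x z) (b y t) =
    b (b (b x y) z) t + b (b (b y z) t) x + b (b (b z t) x) y + b (b (b t x) y) z)

/-- Left multiplications give a representation of the associated Malcev algebra
(with bracket the commutator `m - m.flip`). -/
def LeftRep (m : A →ₗ[k] A →ₗ[k] A) : Prop :=
  ∀ x y z t : A,
    m ((m - m.flip) ((m - m.flip) x y) z) t =
      m x (m y (m z t)) - m z (m x (m y t))
      + m y (m ((m - m.flip) z x) t) - m ((m - m.flip) y z) (m x t)

/-- The associator of a bilinear product. -/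
def assocE (m : A →ₗ[k] A →ₗ[k] A) (x y z : A) : A := m (m x y) z - m x (m y z)

/-- Right associator of a pair of products (`p` = ≺, `s` = ≻). -/
def arR (p s : A →ₗ[k] A →ₗ[k] A) (x y z : A) : A := p (p x y) z - p x (p y z + s y z)

/-- Middle associator. -/
def arM (p s : A →ₗ[k] A →ₗ[k] A) (x y z : A) : A := p (s x y) z - s x (p y z)

/-- Left associator. -/
def arL (p s : A →ₗ[k] A →ₗ[k] A) (x y z : A) : A := s (p x y + s x y) z - s x (s y z)

/-- Alternative dendriform dialgebra identities for the pair (`p` = ≺, `s` = ≻). -/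
def IsAltDend (p s : A →ₗ[k] A →ₗ[k] A) : Prop :=
  (∀ x y z : A, arM p s x y z + arR p s y x z = 0) ∧
  (∀ x y z : A, arM p s x y z + arL p s x z y = 0) ∧
  (∀ x y z : A, arR p s x y z + arR p s x z y = 0) ∧
  (∀ x y z : A, arL p s x y z + arL p s y x z = 0)

/-- right associator of a quadrialgebra -/
def qR (pne pse psw pnw : A →ₗ[k] A →ₗ[k] A) (x y z : A) : A :=
  pnw (pnw x y) z - pnw x (pne y z + pse y z + psw y z + pnw y z)

/-- left associator -/
def qL (pne pse psw pnw : A →ₗ[k] A →ₗ[k] A) (x y z : A) : A :=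
  pse (pne x y + pse x y + psw x y + pnw x y) z - pse x (pse y z)

/-- north-east associator -/
def qNE (pne pse psw pnw : A →ₗ[k] A →ₗ[k] A) (x y z : A) : A := pne (pne x y + pnw x y) z - pne x (pne y z + pse y z)

/-- south-west associator -/
def qSW (pne pse psw pnw : A →ₗ[k] A →ₗ[k] A) (x y z : A) : A := psw (pnw x y + psw x y) z - psw x (pse y z + psw y z)

/-- north associator -/
def qN (pne pse psw pnw : A →ₗ[k] A →ₗ[k] A) (x y z : A) : A := pnw (pne x y) z - pne x (pnw y z + psw y z)

/-- west associator -/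
def qW (pne pse psw pnw : A →ₗ[k] A →ₗ[k] A) (x y z : A) : A := pnw (psw x y) z - psw x (pne y z + pnw y z)

/-- south associator -/
def qS (pne pse psw pnw : A →ₗ[k] A →ₗ[k] A) (x y z : A) : A := psw (pne x y + pse x y) z - pse x (psw y z)

/-- east associator -/
def qE (pne pse psw pnw : A →ₗ[k] A →ₗ[k] A) (x y z : A) : A := pne (pse x y + psw x y) z - pse x (pne y z)

/-- middle associator -/
def qM (pne pse psw pnw : A →ₗ[k] A →ₗ[k] A) (x y z : A) : A := pnw (pse x y) z - pse x (pnw y z)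

/-- Alternative quadrialgebra: the nine defining identities, for products
`pne` = ↗, `pse` = ↘, `psw` = ↙, `pnw` = ↖. -/
def IsAltQuadri (pne pse psw pnw : A →ₗ[k] A →ₗ[k] A) : Prop :=
  (∀ x y z : A, qR pne pse psw pnw x y z + qM pne pse psw pnw y x z = 0) ∧
  (∀ x y z : A, qR pne pse psw pnw x y z + qR pne pse psw pnw x z y = 0) ∧
  (∀ x y z : A, qN pne pse psw pnw x y z + qW pne pse psw pnw y x z = 0) ∧
  (∀ x y z : A, qN pne pse psw pnw x y z + qNE pne pse psw pnw x z y = 0) ∧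
  (∀ x y z : A, qNE pne pse psw pnw x y z + qE pne pse psw pnw y x z = 0) ∧
  (∀ x y z : A, qW pne pse psw pnw x y z + qSW pne pse psw pnw x z y = 0) ∧
  (∀ x y z : A, qSW pne pse psw pnw x y z + qS pne pse psw pnw y x z = 0) ∧
  (∀ x y z : A, qM pne pse psw pnw x y z + qL pne pse psw pnw x z y = 0) ∧
  (∀ x y z : A, qL pne pse psw pnw x y z + qL pne pse psw pnw y x z = 0)

/-- The identity `MD1` for an M-dendriform algebra (`b` = ▶, `a` = ◀). -/
def MD1e (b a : A →ₗ[k] A →ₗ[k] A) (x y z t : A) : A :=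
  b (b (b x y) z) t - b (b (a y x) z) t - b (a z (b x y)) t + b (a z (a y x)) t
  - b x (a y (a z t)) - b x (b y (a z t)) - b x (a y (b z t)) - b x (b y (b z t))
  + a z (b x (a y t)) + a z (b x (b y t))
  + a (a y z) (b x t) + a (b y z) (b x t) - a (a z y) (b x t) - a (b z y) (b x t)
  - a y (b (a z x) t) + a y (b (b x z) t)

/-- The identity `MD2`. -/
def MD2e (b a : A →ₗ[k] A →ₗ[k] A) (x y z t : A) : A :=
  b (b (a x y) z) t - b (b (b y x) z) t - b (a z (a x y)) t + b (a z (b y x)) t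
  - a x (b y (a z t)) - a x (b y (b z t)) + a z (a x (b y t))
  + b (b y z) (a x t) + b (b y z) (b x t) - b (a z y) (a x t) - b (a z y) (b x t)
  - b y (a (a z x) t) - b y (b (a z x) t) - b y (a (b z x) t) - b y (b (b z x) t)
  + b y (a (a x z) t) + b y (b (a x z) t) + b y (a (b x z) t) + b y (b (b x z) t)

/-- The identity `MD3`. -/
def MD3e (b a : A →ₗ[k] A →ₗ[k] A) (x y z t : A) : A :=
  b (a (a x y) z) t + b (a (b x y) z) t - b (a (a y x) z) t - b (a (b y x) z) t
  - b (b z (a x y)) t - b (b z (b x y)) t + b (b z (a y x)) t + b (b z (b y x)) t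
  - a x (a y (b z t))
  + b z (a x (a y t)) + b z (b x (a y t)) + b z (a x (b y t)) + b z (b x (b y t))
  + b (a y z) (a x t) + b (a y z) (b x t) - b (b z y) (a x t) - b (b z y) (b x t)
  - a y (b (b z x) t) + a y (b (a x z) t)

/-- The identity `MD4`. -/
def MD4e (b a : A →ₗ[k] A →ₗ[k] A) (x y z t : A) : A :=
  a (a (a x y) z) t + a (b (a x y) z) t + a (a (b x y) z) t + a (b (b x y) z) t
  - a (a (a y x) z) t - a (b (a y x) z) t - a (a (b y x) z) t - a (b (b y x) z) t
  - a (a z (a x y)) t - a (b z (a x y)) t - a (a z (b x y)) t - a (b z (b x y)) t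
  + a (a z (a y x)) t + a (b z (a y x)) t + a (a z (b y x)) t + a (b z (b y x)) t
  - a x (a y (a z t)) + a z (a x (a y t))
  + a (a y z) (a x t) + a (b y z) (a x t) - a (a z y) (a x t) - a (b z y) (a x t)
  - a y (a (a z x) t) - a y (a (b z x) t) + a y (a (a x z) t) + a y (a (b x z) t)

/-- M-dendriform algebra: the four identities MD1–MD4 (`b` = ▶, `a` = ◀). -/
def IsMDend (b a : A →ₗ[k] A →ₗ[k] A) : Prop :=
  (∀ x y z t : A, MD1e b a x y z t = 0) ∧
  (∀ x y z t : A, MD2e b a x y z t = 0) ∧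
  (∀ x y z t : A, MD3e b a x y z t = 0) ∧
  (∀ x y z t : A, MD4e b a x y z t = 0)

/-- in a pre-Malcev algebra, the commutator satisfies Sagle's identity,
so `(A, [-,-])` is a Malcev algebra. -/
theorem stmt0 (m : A →ₗ[k] A →ₗ[k] A) (h : PMid m) : IsMalcev (m - m.flip) := by
  constructor
  · intro x y
    simp only [LinearMap.sub_apply, LinearMap.flip_apply]
    abel
  · intro x y z t
    rw [← sub_eq_zero]
    have hc : -PMe m x z t y + PMe m x t y z - PMe m x t z y + PMe m y x z t
        - PMe m z x t y + PMe m z y t x - PMe m z t x y - PMe m t x z y = 0 := by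
      unfold PMid at h
      simp [h]
    rw [← hc]
    simp only [PMe, LinearMap.sub_apply, LinearMap.flip_apply, map_sub, LinearMap.map_sub₂]
    abel
end

section
/- In a pre-Malcev algebra (A, ·), the left multiplication operators L_x(t) = x·t give a representation of the associated Malcev algebra: L_{[[x,y],z]} = L_x L_y L_z − L_z L_x L_y + L_y L_{[z,x]} − L_{[y,z]} L_x, where [a,b] = a·b − b·a. -/
variable {k A : Type*} [Field k] [CharZero k] [AddCommGroup A] [Module k A]

/-- in a pre-Malcev algebra, left multiplications give a representation
of the associated Malcev algebra. -/
theorem stmt1 (m : A →ₗ[k] A →ₗ[k] A) (h : PMid m) : LeftRep m := by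
  intro x y z t
  have H := h x y z t
  simp only [PMe] at H
  simp only [LinearMap.sub_apply, LinearMap.flip_apply, map_sub]
  rw [← sub_eq_zero, ← H]
  abel
end

section
/- A vector space A with bilinear product · is a pre-Malcev algebra if and only if the commutator [x,y] = x·y − y·x makes A a Malcev algebra and left multiplication L_x(y) = x·y is a representation of this Malcev algebra on A. -/
variable {k A : Type*} [Field k] [CharZero k] [AddCommGroup A] [Module k A]

/-- `(A,·)` is pre-Malcev iff the commutator is a Malcev bracket and
left multiplication is a representation of this Malcev algebra. -/
theorem stmt2 (m : A →ₗ[k] A →ₗ[k] A) :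
    PMid m ↔ (IsMalcev (m - m.flip) ∧ LeftRep m) := by
  constructor
  · intro h
    refine ⟨⟨fun x y => ?_, fun x y z t => ?_⟩, fun x y z t => ?_⟩
    · simp only [LinearMap.sub_apply, LinearMap.flip_apply]
      abel
    · have h1 := h x z t y
      have h2 := h x t y z
      have h3 := h x t z y
      have h4 := h y x z t
      have h5 := h z x t y
      have h6 := h z y t x
      have h7 := h z t x y
      have h8 := h t x z y
      rw [← sub_eq_zero]
      have e : (m - m.flip) ((m - m.flip) x z) ((m - m.flip) y t) -
          ((m - m.flip) ((m - m.flip) ((m - m.flip) x y) z) t +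
            (m - m.flip) ((m - m.flip) ((m - m.flip) y z) t) x +
            (m - m.flip) ((m - m.flip) ((m - m.flip) z t) x) y +
            (m - m.flip) ((m - m.flip) ((m - m.flip) t x) y) z) =
          -PMe m x z t y + PMe m x t y z - PMe m x t z y + PMe m y x z t
            - PMe m z x t y + PMe m z y t x - PMe m z t x y - PMe m t x z y := by
        simp only [PMe, LinearMap.sub_apply, LinearMap.flip_apply, map_sub]
        abel
      rw [e, h1, h2, h3, h4, h5, h6, h7, h8]
      abel
    · have h1 := h x y z t
      rw [← sub_eq_zero, ← h1]
      simp only [PMe, LinearMap.sub_apply, LinearMap.flip_apply, map_sub]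
      abel
  · rintro ⟨-, hl⟩
    intro x y z t
    have h1 := sub_eq_zero.mpr (hl x y z t)
    rw [← h1]
    simp only [PMe, LinearMap.sub_apply, LinearMap.flip_apply, map_sub]
    abel
end

section
/- If R is a Rota-Baxter operator of weight zero on a Malcev algebra (M,[-,-]), then the product x·y = [R(x), y] makes M a pre-Malcev algebra. -/
variable {k A : Type*} [Field k] [CharZero k] [AddCommGroup A] [Module k A]

/-- a Rota-Baxter operator of weight zero on a Malcev algebra induces
a pre-Malcev structure via `x · y = [R x, y]`. -/
theorem stmt4 (b : A →ₗ[k] A →ₗ[k] A) (hM : IsMalcev b) (R : A →ₗ[k] A)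
    (hR : ∀ x y : A, b (R x) (R y) = R (b (R x) y + b x (R y))) :
    PMid (b.comp R) := by
  obtain ⟨hA, hS⟩ := hM
  intro x y z t
  simp only [PMid, PMe, LinearMap.comp_apply]
  have key : ∀ u v : A, R (b (R u) v) - R (b (R v) u) = b (R u) (R v) := by
    intro u v
    rw [hR u v, map_add, hA (R v) u, map_neg]
    abel
  have e1 : b (R (b (R y) z)) (b (R x) t) - b (R (b (R z) y)) (b (R x) t)
      = b (b (R y) (R z)) (b (R x) t) := by
    rw [← key y z]; simp only [map_sub, LinearMap.sub_apply]
  have e2a : b (R (b (R (b (R x) y)) z)) t - b (R (b (R (b (R y) x)) z)) t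
      = b (R (b (b (R x) (R y)) z)) t := by
    rw [← key x y]; simp only [map_sub, LinearMap.sub_apply]
  have e3 : b (R y) (b (R (b (R x) z)) t) - b (R y) (b (R (b (R z) x)) t)
      = b (R y) (b (b (R x) (R z)) t) := by
    rw [← key x z]; simp only [map_sub, LinearMap.sub_apply]
  have hu : R (b (R x) y - b (R y) x) = b (R x) (R y) := by
    rw [map_sub]; exact key x y
  have e2b : b (b (b (R x) (R y)) (R z)) t
      = b (R (b (b (R x) (R y)) z)) t - b (R (b (R z) (b (R x) y))) t
        + b (R (b (R z) (b (R y) x))) t := by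
    have h := hR (b (R x) y - b (R y) x) z
    rw [hu, hA (b (R x) y - b (R y) x) (R z)] at h
    rw [h]
    simp only [map_sub, map_add, map_neg, LinearMap.sub_apply, LinearMap.add_apply,
      LinearMap.neg_apply]
    abel
  have a1 : b (b (R y) (R z)) (b (R x) t) = b (b (R x) t) (b (R z) (R y)) := by
    rw [hA (R y) (R z), map_neg, LinearMap.neg_apply, hA (b (R x) t) (b (R z) (R y))]
  have a2 : b (b (b (R x) (R y)) (R z)) t = - b (b (b (R y) (R x)) (R z)) t := by
    rw [hA (R x) (R y)]; simp only [map_neg, LinearMap.neg_apply]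
  have a3 : b (R y) (b (b (R x) (R z)) t) = - b (b (b (R x) (R z)) t) (R y) :=
    hA _ _
  have a4 : b (R x) (b (R y) (b (R z) t)) = b (b (b (R z) t) (R y)) (R x) := by
    rw [hA (b (R z) t) (R y)]; simp only [map_neg, LinearMap.neg_apply]
    rw [hA (R x) (b (R y) (b (R z) t))]
  have a5 : b (R z) (b (R x) (b (R y) t)) = - b (b (b t (R y)) (R x)) (R z) := by
    rw [hA t (R y)]; simp only [map_neg, LinearMap.neg_apply]
    rw [hA (b (R y) t) (R x)]; simp only [map_neg, LinearMap.neg_apply, neg_neg]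
    rw [hA (R z) (b (R x) (b (R y) t))]
  have S := hS (R x) (R z) t (R y)
  linear_combination (norm := module) e1 + e2a - e2b + e3 + a1 + a2 + a3 - a4 + a5 + S
end

section
/- In an alternative dendriform dialgebra (A, ≺, ≻), the dendriform commutator x·y = x≻y − y≺x satisfies the pre-Malcev identity PM(x,y,z,t) = 0, i.e., (A,·) is a pre-Malcev algebra. -/
variable {k A : Type*} [Field k] [CharZero k] [AddCommGroup A] [Module k A]

set_option maxHeartbeats 4000000 in
/-- the dendriform commutator `x·y = x≻y − y≺x` of an alternative
dendriform dialgebra is pre-Malcev. -/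
theorem stmt5 (p s : A →ₗ[k] A →ₗ[k] A) (h : IsAltDend p s) :
    PMid (s - p.flip) := by
  obtain ⟨h1, h2, h3, h4⟩ := h
  intro x y z t
  have e0 := h4 (p x y) z t
  have e1 := h4 (s x y) z t
  have e2 := h1 (p x y) t z
  have e3 := h2 (p x y) t z
  have e4 := h1 (s x y) t z
  have e5 := h2 (s x y) t z
  have e6 := h4 (p x z) y t
  have e7 := h1 y t (p x z)
  have e8 := h2 y t (p x z)
  have e9 := h4 (s x z) y t
  have e10 := h1 y t (s x z)
  have e11 := h2 y t (s x z)
  have e12 := h1 (p x z) t y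
  have e13 := h2 (p x z) t y
  have e14 := h1 (s x z) t y
  have e15 := h2 (s x z) t y
  have e16 := h3 (s x t) y z
  have e17 := h1 y (s x t) z
  have e18 := h2 y (s x t) z
  have e19 := h4 y z (s x t)
  have e20 := h1 z (s x t) y
  have e21 := h4 (p y x) z t
  have e22 := h1 z t (p y x)
  have e23 := h2 z t (p y x)
  have e24 := h4 (s y x) z t
  have e25 := h1 z t (s y x)
  have e26 := h2 z t (s y x)
  have e27 := h1 (p y x) t z
  have e28 := h2 (p y x) t z
  have e29 := h1 (s y x) t z
  have e30 := h2 (s y x) t z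
  have e31 := h4 (p y z) x t
  have e32 := h1 x t (p y z)
  have e33 := h2 x t (p y z)
  have e34 := h4 (s y z) x t
  have e35 := h1 x t (s y z)
  have e36 := h2 x t (s y z)
  have e37 := h1 (p y z) t x
  have e38 := h1 (s y z) t x
  have e39 := h1 x (s y t) z
  have e40 := h2 x (s y t) z
  have e41 := h1 z (s y t) x
  have e42 := h4 (p z x) y t
  have e43 := h1 y t (p z x)
  have e44 := h4 (s z x) y t
  have e45 := h1 y t (s z x)
  have e46 := h1 (p z x) t y
  have e47 := h2 (p z x) t y
  have e48 := h1 (s z x) t y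
  have e49 := h2 (s z x) t y
  have e50 := h4 (p z y) x t
  have e51 := h1 x t (p z y)
  have e52 := h2 x t (p z y)
  have e53 := h4 (s z y) x t
  have e54 := h1 x t (s z y)
  have e55 := h2 x t (s z y)
  have e56 := h2 (p z y) t x
  have e57 := h2 (s z y) t x
  have e58 := h3 (s z t) x y
  have e59 := h1 x (s z t) y
  have e60 := h2 x (s z t) y
  have e61 := h4 x y (s z t)
  have e62 := h3 (p t x) y z
  have e63 := h1 y (p t x) z
  have e64 := h2 y (p t x) z
  have e65 := h4 y z (p t x)
  have e66 := h3 (p t y) x z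
  have e67 := h1 x (p t y) z
  have e68 := h2 x (p t y) z
  have e69 := h4 x z (p t y)
  have e70 := h3 (p t z) x y
  have e71 := h1 x (p t z) y
  have e72 := h2 x (p t z) y
  have e73 := h4 x y (p t z)
  have e74 := congrArg (⇑(p t)) (h1 x y z)
  have e75 := congrArg (⇑(p t)) (h2 x y z)
  have e76 := congrArg (fun u => s u t) (h2 x y z)
  have e77 := congrArg (⇑(p t)) (h3 x y z)
  have e78 := congrArg (fun u => s u t) (h3 x y z)
  have e79 := congrArg (⇑(p t)) (h4 x y z)
  have e80 := congrArg (fun u => p u z) (h4 x y t)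
  have e81 := congrArg (⇑(s z)) (h4 x y t)
  have e82 := congrArg (⇑(p t)) (h1 x z y)
  have e83 := congrArg (⇑(p t)) (h2 x z y)
  have e84 := congrArg (fun u => s u t) (h2 x z y)
  have e85 := congrArg (⇑(p t)) (h4 x z y)
  have e86 := congrArg (fun u => p u y) (h4 x z t)
  have e87 := congrArg (⇑(s y)) (h4 x z t)
  have e88 := congrArg (fun u => p u z) (h1 x t y)
  have e89 := congrArg (fun u => p u z) (h2 x t y)
  have e90 := congrArg (⇑(s z)) (h2 x t y)
  have e91 := congrArg (fun u => p u y) (h1 x t z)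
  have e92 := congrArg (⇑(s y)) (h1 x t z)
  have e93 := congrArg (fun u => p u y) (h2 x t z)
  have e94 := congrArg (⇑(s y)) (h2 x t z)
  have e95 := congrArg (⇑(p t)) (h1 y x z)
  have e96 := congrArg (⇑(p t)) (h2 y x z)
  have e97 := congrArg (fun u => s u t) (h2 y x z)
  have e98 := congrArg (⇑(p t)) (h3 y x z)
  have e99 := congrArg (fun u => s u t) (h3 y x z)
  have e100 := congrArg (⇑(p t)) (h2 y z x)
  have e101 := congrArg (fun u => s u t) (h2 y z x)
  have e102 := congrArg (fun u => p u x) (h4 y z t)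
  have e103 := congrArg (⇑(s x)) (h4 y z t)
  have e104 := congrArg (fun u => p u z) (h1 y t x)
  have e105 := congrArg (⇑(s z)) (h1 y t x)
  have e106 := congrArg (fun u => p u z) (h2 y t x)
  have e107 := congrArg (⇑(s z)) (h2 y t x)
  have e108 := congrArg (fun u => p u x) (h1 y t z)
  have e109 := congrArg (⇑(s x)) (h1 y t z)
  have e110 := congrArg (⇑(p t)) (h1 z x y)
  simp only [arR, arM, arL, map_add, map_sub, map_zero, LinearMap.add_apply,
    LinearMap.sub_apply, LinearMap.zero_apply] at e0 e1 e2 e3 e4 e5 e6 e7 e8 e9 e10 e11 e12 e13 e14 e15 e16 e17 e18 e19 e20 e21 e22 e23 e24 e25 e26 e27 e28 e29 e30 e31 e32 e33 e34 e35 e36 e37 e38 e39 e40 e41 e42 e43 e44 e45 e46 e47 e48 e49 e50 e51 e52 e53 e54 e55 e56 e57 e58 e59 e60 e61 e62 e63 e64 e65 e66 e67 e68 e69 e70 e71 e72 e73 e74 e75 e76 e77 e78 e79 e80 e81 e82 e83 e84 e85 e86 e87 e88 e89 e90 e91 e92 e93 e94 e95 e96 e97 e98 e99 e100 e101 e102 e103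 e104 e105 e106 e107 e108 e109 e110
  have key : (2 : ℤ) • PMe (s - p.flip) x y z t = 0 := by
    simp only [PMe, LinearMap.sub_apply, LinearMap.flip_apply, map_sub, map_add,
      LinearMap.add_apply, smul_sub, smul_add]
    linear_combination (norm := abel1)
      (-2 : ℤ) • e0 +
      (-2 : ℤ) • e1 +
      (-15 : ℤ) • e2 +
      (10 : ℤ) • e3 +
      (-15 : ℤ) • e4 +
      (10 : ℤ) • e5 +
      (2 : ℤ) • e6 +
      (13 : ℤ) • e7 +
      (-16 : ℤ) • e8 +
      (2 : ℤ) • e9 +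
      (13 : ℤ) • e10 +
      (-16 : ℤ) • e11 +
      (-4 : ℤ) • e12 +
      (4 : ℤ) • e13 +
      (-4 : ℤ) • e14 +
      (4 : ℤ) • e15 +
      (8 : ℤ) • e16 +
      (-9 : ℤ) • e17 +
      (18 : ℤ) • e18 +
      (-2 : ℤ) • e19 +
      (-10 : ℤ) • e20 +
      (6 : ℤ) • e21 +
      (2 : ℤ) • e22 +
      (-4 : ℤ) • e23 +
      (6 : ℤ) • e24 +
      (2 : ℤ) • e25 +
      (-4 : ℤ) • e26 +
      (-15 : ℤ) • e27 +
      (6 : ℤ) • e28 +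
      (-15 : ℤ) • e29 +
      (6 : ℤ) • e30 +
      (14 : ℤ) • e31 +
      (17 : ℤ) • e32 +
      (-20 : ℤ) • e33 +
      (14 : ℤ) • e34 +
      (17 : ℤ) • e35 +
      (-20 : ℤ) • e36 +
      (2 : ℤ) • e37 +
      (2 : ℤ) • e38 +
      (-3 : ℤ) • e39 +
      (6 : ℤ) • e40 +
      (-2 : ℤ) • e41 +
      (-14 : ℤ) • e42 +
      (-2 : ℤ) • e43 +
      (-14 : ℤ) • e44 +
      (-2 : ℤ) • e45 +
      (-2 : ℤ) • e46 +
      (14 : ℤ) • e47 +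
      (-2 : ℤ) • e48 +
      (14 : ℤ) • e49 +
      (-2 : ℤ) • e50 +
      (4 : ℤ) • e51 +
      (-4 : ℤ) • e52 +
      (-2 : ℤ) • e53 +
      (4 : ℤ) • e54 +
      (-4 : ℤ) • e55 +
      (2 : ℤ) • e56 +
      (2 : ℤ) • e57 +
      (-2 : ℤ) • e58 +
      (2 : ℤ) • e59 +
      (-4 : ℤ) • e60 +
      (12 : ℤ) • e61 +
      (6 : ℤ) • e62 +
      (9 : ℤ) • e63 +
      (-4 : ℤ) • e64 +
      (4 : ℤ) • e65 +
      (-2 : ℤ) • e66 +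
      (15 : ℤ) • e67 +
      (-12 : ℤ) • e68 +
      (12 : ℤ) • e69 +
      (2 : ℤ) • e70 +
      (-2 : ℤ) • e71 +
      (4 : ℤ) • e72 +
      (-9 : ℤ) • e73 +
      (-15 : ℤ) • e74 +
      (-2 : ℤ) • e75 +
      (-6 : ℤ) • e76 +
      (-2 : ℤ) • e77 +
      (-6 : ℤ) • e78 +
      (-15 : ℤ) • e79 +
      (-11 : ℤ) • e80 +
      (8 : ℤ) • e81 +
      (-2 : ℤ) • e82 +
      (-2 : ℤ) • e83 +
      (-6 : ℤ) • e84 +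
      (-2 : ℤ) • e85 +
      (-10 : ℤ) • e86 +
      (-16 : ℤ) • e87 +
      (-15 : ℤ) • e88 +
      (16 : ℤ) • e89 +
      (-10 : ℤ) • e90 +
      (-6 : ℤ) • e91 +
      (5 : ℤ) • e92 +
      (8 : ℤ) • e93 +
      (4 : ℤ) • e94 +
      (-15 : ℤ) • e95 +
      (2 : ℤ) • e96 +
      (-14 : ℤ) • e97 +
      (2 : ℤ) • e98 +
      (-14 : ℤ) • e99 +
      (2 : ℤ) • e100 +
      (-14 : ℤ) • e101 +
      (-2 : ℤ) • e102 +
      (-6 : ℤ) • e103 +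
      (-15 : ℤ) • e104 +
      (2 : ℤ) • e105 +
      (20 : ℤ) • e106 +
      (-6 : ℤ) • e107 +
      (2 : ℤ) • e108 +
      (3 : ℤ) • e109 +
      (-2 : ℤ) • e110
  have key2 : ((2 : ℤ) : k) • PMe (s - p.flip) x y z t = 0 := by
    rw [Int.cast_smul_eq_zsmul]; exact key
  have h20 : ((2 : ℤ) : k) ≠ 0 := by norm_num
  exact (smul_eq_zero.mp key2).resolve_left h20
end

section
/- In an alternative dendriform dialgebra (A, ≺, ≻), the sum product x∗y = x≺y + x≻y makes A an alternative algebra, i.e., the associator of ∗ satisfies (x,x,y) = 0 and (y,x,x) = 0. -/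
variable {k A : Type*} [Field k] [CharZero k] [AddCommGroup A] [Module k A]

/-- the sum product `x∗y = x≺y + x≻y` of an alternative dendriform
dialgebra is an alternative product. -/
theorem stmt6 (p s : A →ₗ[k] A →ₗ[k] A) (h : IsAltDend p s) :
    ∀ x y : A,
      (p + s) ((p + s) x x) y = (p + s) x ((p + s) x y) ∧
      (p + s) ((p + s) y x) x = (p + s) y ((p + s) x x) := by
  obtain ⟨h1, h2, h3, h4⟩ := h
  intro x y
  have hL : arL p s x x y = 0 := by
    have := h4 x x y
    have h2ne : (2 : k) ≠ 0 := two_ne_zero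
    have : (2 : k) • arL p s x x y = 0 := by
      rw [two_smul]; exact this
    exact (smul_eq_zero.mp this).resolve_left h2ne
  have hRyxx : arR p s y x x = 0 := by
    have := h3 y x x
    have h2ne : (2 : k) ≠ 0 := two_ne_zero
    have : (2 : k) • arR p s y x x = 0 := by
      rw [two_smul]; exact this
    exact (smul_eq_zero.mp this).resolve_left h2ne
  constructor
  · have key : (p + s) ((p + s) x x) y - (p + s) x ((p + s) x y)
        = arR p s x x y + arM p s x x y + arL p s x x y := by
      simp only [arR, arM, arL, LinearMap.add_apply, map_add]
      abel
    have hRM : arM p s x x y + arR p s x x y = 0 := h1 x x y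
    have : (p + s) ((p + s) x x) y - (p + s) x ((p + s) x y) = 0 := by
      rw [key, hL, add_zero, add_comm, hRM]
    exact sub_eq_zero.mp this
  · have key : (p + s) ((p + s) y x) x - (p + s) y ((p + s) x x)
        = arR p s y x x + arM p s y x x + arL p s y x x := by
      simp only [arR, arM, arL, LinearMap.add_apply, map_add]
      abel
    have hML : arM p s y x x + arL p s y x x = 0 := h2 y x x
    have : (p + s) ((p + s) y x) x - (p + s) y ((p + s) x x) = 0 := by
      rw [key, hRyxx, zero_add, hML]
    exact sub_eq_zero.mp this
end

section
/- In the defining identities of an alternative dendriform dialgebra, either of the two identities (x,y,z)_r + (x,z,y)_r = 0 and (x,y,z)_ℓ + (y,x,z)_ℓ = 0 can be deduced from the other one together with (x,y,z)_m + (y,x,z)_r = 0 and (x,y,z)_m + (x,z,y)_ℓ = 0 (over a field of characteristic 0). -/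
variable {k A : Type*} [Field k] [CharZero k] [AddCommGroup A] [Module k A]

/-- given the two mixed identities, either of the right and left
alternativity identities for a pair of dendriform products implies the other. -/
theorem stmt7 (p s : A →ₗ[k] A →ₗ[k] A)
    (h1 : ∀ x y z : A, arM p s x y z + arR p s y x z = 0)
    (h2 : ∀ x y z : A, arM p s x y z + arL p s x z y = 0) :
    (∀ x y z : A, arR p s x y z + arR p s x z y = 0) ↔
      (∀ x y z : A, arL p s x y z + arL p s y x z = 0) := by
  have key : ∀ x y z : A, arR p s y x z = arL p s x z y := by
    intro x y z
    have a := h1 x y z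
    have b := h2 x y z
    have ha : arR p s y x z = - arM p s x y z := by
      rw [eq_neg_iff_add_eq_zero, add_comm]; exact a
    have hb : arL p s x z y = - arM p s x y z := by
      rw [eq_neg_iff_add_eq_zero, add_comm]; exact b
    rw [ha, hb]
  constructor
  · intro h x y z
    have e1 : arL p s x y z = arR p s z x y := (key x z y).symm
    have e2 : arL p s y x z = arR p s z y x := (key y z x).symm
    rw [e1, e2]
    exact h z x y
  · intro h x y z
    rw [key y x z, key z x y]
    exact h y z x
end

section
/- If R is a Rota-Baxter operator of weight zero on an alternative algebra (A,∗), then the operations x≺y = x∗R(y) and x≻y = R(x)∗y make A an alternative dendriform dialgebra. -/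
variable {k A : Type*} [Field k] [CharZero k] [AddCommGroup A] [Module k A]

/-- a weight-zero Rota-Baxter operator on an alternative algebra
yields an alternative dendriform dialgebra via `x≺y = x∗R(y)`, `x≻y = R(x)∗y`. -/
theorem stmt8 (mul : A →ₗ[k] A →ₗ[k] A)
    (hAlt1 : ∀ x y z : A, assocE mul x y z + assocE mul y x z = 0)
    (hAlt2 : ∀ x y z : A, assocE mul x y z + assocE mul x z y = 0)
    (R : A →ₗ[k] A)
    (hR : ∀ x y : A, mul (R x) (R y) = R (mul (R x) y + mul x (R y))) :
    IsAltDend ((mul.flip.comp R).flip) (mul.comp R) := by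
  refine ⟨?_, ?_, ?_, ?_⟩ <;> intro x y z
  · have h := hAlt1 (R x) y (R z)
    simp only [assocE] at h
    rw [hR x z] at h
    simp only [map_add, LinearMap.add_apply] at h
    simp only [arM, arR, LinearMap.flip_apply, LinearMap.comp_apply, map_add,
      LinearMap.add_apply]
    linear_combination (norm := module) h
  · have h := hAlt2 (R x) y (R z)
    simp only [assocE] at h
    rw [hR x z] at h
    simp only [map_add, LinearMap.add_apply] at h
    simp only [arM, arL, LinearMap.flip_apply, LinearMap.comp_apply, map_add,
      LinearMap.add_apply]
    linear_combination (norm := module) h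
  · have h := hAlt2 x (R y) (R z)
    simp only [assocE] at h
    rw [hR y z, hR z y] at h
    simp only [map_add, LinearMap.add_apply] at h
    simp only [arR, LinearMap.flip_apply, LinearMap.comp_apply, map_add,
      LinearMap.add_apply]
    linear_combination (norm := module) h
  · have h := hAlt1 (R x) (R y) z
    simp only [assocE] at h
    rw [hR x y, hR y x] at h
    simp only [map_add, LinearMap.add_apply] at h
    simp only [arL, LinearMap.flip_apply, LinearMap.comp_apply, map_add,
      LinearMap.add_apply]
    linear_combination (norm := module) h
end

section
/- Let A be an alternative quadrialgebra with products ↗, ↘, ↙, ↖. Then (A, ≺, ≻) with x≻y = x↗y + x↘y and x≺y = x↖y + x↙y is an alternative dendriform dialgebra (the horizontal structure). -/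
variable {k A : Type*} [Field k] [CharZero k] [AddCommGroup A] [Module k A]

/-- the horizontal structure `(A, ≺ = ↖+↙, ≻ = ↗+↘)` of an
alternative quadrialgebra is an alternative dendriform dialgebra. -/
theorem stmt9 (pne pse psw pnw : A →ₗ[k] A →ₗ[k] A)
    (h : IsAltQuadri pne pse psw pnw) :
    IsAltDend (pnw + psw) (pne + pse) := by
  obtain ⟨h1, h2, h3, h4, h5, h6, h7, h8, h9⟩ := h
  refine ⟨fun x y z => ?_, fun x y z => ?_, fun x y z => ?_, fun x y z => ?_⟩
  · have e1 := h1 y x z; have e2 := h3 x y z; have e3 := h7 y x z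
    simp only [arM, arR, qR, qM, qN, qW, qSW, qS, LinearMap.add_apply, map_add] at e1 e2 e3 ⊢
    linear_combination (norm := abel) e1 + e2 + e3
  · have e1 := h4 x y z; have e2 := h8 x y z; have e3 := h7 y x z
    have e4 := h5 z x y; have e5 := h6 y z x; have e6 := h4 z y x; have e7 := h3 z y x
    simp only [arM, arL, qN, qNE, qM, qL, qSW, qS, qE, qW, LinearMap.add_apply, map_add]
      at e1 e2 e3 e4 e5 e6 e7 ⊢
    linear_combination (norm := abel) e1 + e2 + e3 + e4 - e5 - e6 + e7
  · have e1 := h2 x y z; have e2 := h6 x y z; have e3 := h6 x z y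
    simp only [arR, qR, qW, qSW, LinearMap.add_apply, map_add] at e1 e2 e3 ⊢
    linear_combination (norm := abel) e1 + e2 + e3
  · have e1 := h9 x y z; have e2 := h5 x y z; have e3 := h5 y x z
    simp only [arL, qL, qNE, qE, LinearMap.add_apply, map_add] at e1 e2 e3 ⊢
    linear_combination (norm := abel) e1 + e2 + e3
end

section
/- Let A be an alternative quadrialgebra. Then (A, ∨, ∧) with x∨y = x↘y + x↙y and x∧y = x↗y + x↖y is an alternative dendriform dialgebra (the vertical structure), where ∧ plays the role of ≺ and ∨ the role of ≻. -/
variable {k A : Type*} [Field k] [CharZero k] [AddCommGroup A] [Module k A]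

/-- the vertical structure `(A, ∧ = ↗+↖, ∨ = ↘+↙)` of an
alternative quadrialgebra is an alternative dendriform dialgebra
(∧ playing the role of ≺ and ∨ of ≻). -/
theorem stmt10 (pne pse psw pnw : A →ₗ[k] A →ₗ[k] A)
    (h : IsAltQuadri pne pse psw pnw) :
    IsAltDend (pne + pnw) (pse + psw) := by

  obtain ⟨h1, h2, h3, h4, h5, h6, h7, h8, h9⟩ := h
  have eR : ∀ x y z : A, arR (pne + pnw) (pse + psw) x y z
      = qNE pne pse psw pnw x y z + qN pne pse psw pnw x y z
        + qR pne pse psw pnw x y z := by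
    intro x y z
    simp only [arR, qNE, qN, qR, LinearMap.add_apply, map_add]
    abel
  have eL : ∀ x y z : A, arL (pne + pnw) (pse + psw) x y z
      = qL pne pse psw pnw x y z + qS pne pse psw pnw x y z
        + qSW pne pse psw pnw x y z := by
    intro x y z
    simp only [arL, qL, qS, qSW, LinearMap.add_apply, map_add]
    abel
  have eM : ∀ x y z : A, arM (pne + pnw) (pse + psw) x y z
      = qE pne pse psw pnw x y z + qM pne pse psw pnw x y z
        + qW pne pse psw pnw x y z := by
    intro x y z
    simp only [arM, qE, qM, qW, LinearMap.add_apply, map_add]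
    abel
  have eES : ∀ x y z : A, qE pne pse psw pnw x y z + qS pne pse psw pnw x z y = 0 := by
    intro x y z
    have a1 := h5 y x z
    have a2 := h4 y z x
    have a3 := h3 y z x
    have a4 := h6 z y x
    have a5 := h7 z x y
    have comb : qE pne pse psw pnw x y z + qS pne pse psw pnw x z y
        = (qNE pne pse psw pnw y x z + qE pne pse psw pnw x y z)
          + (qN pne pse psw pnw y z x + qW pne pse psw pnw z y x)
          + (qSW pne pse psw pnw z x y + qS pne pse psw pnw x z y)
          - (qN pne pse psw pnw y z x + qNE pne pse psw pnw y x z)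
          - (qW pne pse psw pnw z y x + qSW pne pse psw pnw z x y) := by abel
    rw [comb, a1, a3, a5, a2, a4]
    abel
  refine ⟨?_, ?_, ?_, ?_⟩
  · intro x y z
    rw [eM x y z, eR y x z]
    have a1 := h5 y x z
    have a2 := h3 y x z
    have a3 := h1 y x z
    have comb : qE pne pse psw pnw x y z + qM pne pse psw pnw x y z
          + qW pne pse psw pnw x y z
          + (qNE pne pse psw pnw y x z + qN pne pse psw pnw y x z
            + qR pne pse psw pnw y x z)
        = (qNE pne pse psw pnw y x z + qE pne pse psw pnw x y z)
          + (qN pne pse psw pnw y x z + qW pne pse psw pnw x y z)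
          + (qR pne pse psw pnw y x z + qM pne pse psw pnw x y z) := by abel
    rw [comb, a1, a2, a3]
    abel
  · intro x y z
    rw [eM x y z, eL x z y]
    have a1 := eES x y z
    have a2 := h8 x y z
    have a3 := h6 x y z
    have comb : qE pne pse psw pnw x y z + qM pne pse psw pnw x y z
          + qW pne pse psw pnw x y z
          + (qL pne pse psw pnw x z y + qS pne pse psw pnw x z y
            + qSW pne pse psw pnw x z y)
        = (qE pne pse psw pnw x y z + qS pne pse psw pnw x z y)
          + (qM pne pse psw pnw x y z + qL pne pse psw pnw x z y)
          + (qW pne pse psw pnw x y z + qSW pne pse psw pnw x z y) := by abel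
    rw [comb, a1, a2, a3]
    abel
  · intro x y z
    rw [eR x y z, eR x z y]
    have a1 := h2 x y z
    have a2 := h4 x y z
    have a3 := h4 x z y
    have comb : qNE pne pse psw pnw x y z + qN pne pse psw pnw x y z
          + qR pne pse psw pnw x y z
          + (qNE pne pse psw pnw x z y + qN pne pse psw pnw x z y
            + qR pne pse psw pnw x z y)
        = (qR pne pse psw pnw x y z + qR pne pse psw pnw x z y)
          + (qN pne pse psw pnw x y z + qNE pne pse psw pnw x z y)
          + (qN pne pse psw pnw x z y + qNE pne pse psw pnw x y z) := by abel
    rw [comb, a1, a2, a3]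
    abel
  · intro x y z
    rw [eL x y z, eL y x z]
    have a1 := h9 x y z
    have a2 := h7 x y z
    have a3 := h7 y x z
    have comb : qL pne pse psw pnw x y z + qS pne pse psw pnw x y z
          + qSW pne pse psw pnw x y z
          + (qL pne pse psw pnw y x z + qS pne pse psw pnw y x z
            + qSW pne pse psw pnw y x z)
        = (qL pne pse psw pnw x y z + qL pne pse psw pnw y x z)
          + (qSW pne pse psw pnw x y z + qS pne pse psw pnw y x z)
          + (qSW pne pse psw pnw y x z + qS pne pse psw pnw x y z) := by abel
    rw [comb, a1, a2, a3]
    abel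
end

section
/- In an alternative quadrialgebra A, the total sum product x∗y = x↗y + x↘y + x↙y + x↖y makes A an alternative algebra. -/
variable {k A : Type*} [Field k] [CharZero k] [AddCommGroup A] [Module k A]

/-- the total sum product of an alternative quadrialgebra is
alternative. -/
theorem stmt11 (pne pse psw pnw : A →ₗ[k] A →ₗ[k] A)
    (h : IsAltQuadri pne pse psw pnw) :
    (∀ x y z : A,
        assocE (pne + pse + psw + pnw) x y z
          + assocE (pne + pse + psw + pnw) y x z = 0) ∧
    (∀ x y z : A,
        assocE (pne + pse + psw + pnw) x y z
          + assocE (pne + pse + psw + pnw) x z y = 0) := by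
  obtain ⟨h1, h2, h3, h4, h5, h6, h7, h8, h9⟩ := h
  constructor
  · intro x y z
    have e : assocE (pne + pse + psw + pnw) x y z
        + assocE (pne + pse + psw + pnw) y x z =
        (qR pne pse psw pnw x y z + qM pne pse psw pnw y x z)
      + (qR pne pse psw pnw y x z + qM pne pse psw pnw x y z)
      + (qN pne pse psw pnw x y z + qW pne pse psw pnw y x z)
      + (qN pne pse psw pnw y x z + qW pne pse psw pnw x y z)
      + (qNE pne pse psw pnw x y z + qE pne pse psw pnw y x z)
      + (qNE pne pse psw pnw y x z + qE pne pse psw pnw x y z)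
      + (qSW pne pse psw pnw x y z + qS pne pse psw pnw y x z)
      + (qSW pne pse psw pnw y x z + qS pne pse psw pnw x y z)
      + (qL pne pse psw pnw x y z + qL pne pse psw pnw y x z) := by
      simp only [assocE, qR, qM, qN, qW, qNE, qE, qSW, qS, qL, LinearMap.add_apply,
        map_add, map_sub]
      abel
    rw [e, h1 x y z, h1 y x z, h3 x y z, h3 y x z, h5 x y z, h5 y x z,
      h7 x y z, h7 y x z, h9 x y z]
    abel
  · intro x y z
    have e : assocE (pne + pse + psw + pnw) x y z
        + assocE (pne + pse + psw + pnw) x z y =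
        (qR pne pse psw pnw x y z + qR pne pse psw pnw x z y)
      + (qN pne pse psw pnw x y z + qNE pne pse psw pnw x z y)
      + (qN pne pse psw pnw x z y + qNE pne pse psw pnw x y z)
      + (qW pne pse psw pnw x y z + qSW pne pse psw pnw x z y)
      + (qW pne pse psw pnw x z y + qSW pne pse psw pnw x y z)
      + (qM pne pse psw pnw x y z + qL pne pse psw pnw x z y)
      + (qM pne pse psw pnw x z y + qL pne pse psw pnw x y z)
      + ((qSW pne pse psw pnw y x z + qS pne pse psw pnw x y z)
        + (qNE pne pse psw pnw z x y + qE pne pse psw pnw x z y)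
        - (qN pne pse psw pnw z y x + qNE pne pse psw pnw z x y)
        - (qW pne pse psw pnw y z x + qSW pne pse psw pnw y x z)
        + (qN pne pse psw pnw z y x + qW pne pse psw pnw y z x))
      + ((qSW pne pse psw pnw z x y + qS pne pse psw pnw x z y)
        + (qNE pne pse psw pnw y x z + qE pne pse psw pnw x y z)
        - (qN pne pse psw pnw y z x + qNE pne pse psw pnw y x z)
        - (qW pne pse psw pnw z y x + qSW pne pse psw pnw z x y)
        + (qN pne pse psw pnw y z x + qW pne pse psw pnw z y x)) := by
      simp only [assocE, qR, qM, qN, qW, qNE, qE, qSW, qS, qL, LinearMap.add_apply,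
        map_add, map_sub]
      abel
    rw [e, h2 x y z, h4 x y z, h4 x z y, h6 x y z, h6 x z y, h8 x y z, h8 x z y,
      h7 y x z, h5 z x y, h4 z y x, h6 y z x, h3 z y x,
      h7 z x y, h5 y x z, h4 y z x, h6 z y x, h3 y z x]
    abel
end

section
/- If R is a Rota-Baxter operator on an alternative dendriform dialgebra (A,≺,≻), then the four operations x↗y = x≻R(y), x↘y = R(x)≻y, x↙y = R(x)≺y, x↖y = x≺R(y) make A an alternative quadrialgebra. -/
variable {k A : Type*} [Field k] [CharZero k] [AddCommGroup A] [Module k A]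

/-- a Rota-Baxter operator on an alternative dendriform dialgebra
induces an alternative quadrialgebra via `x↗y = x≻R(y)`, `x↘y = R(x)≻y`,
`x↙y = R(x)≺y`, `x↖y = x≺R(y)`. -/
theorem stmt12 (p s : A →ₗ[k] A →ₗ[k] A) (h : IsAltDend p s) (R : A →ₗ[k] A)
    (hRs : ∀ x y : A, s (R x) (R y) = R (s (R x) y + s x (R y)))
    (hRp : ∀ x y : A, p (R x) (R y) = R (p (R x) y + p x (R y))) :
    IsAltQuadri ((s.flip.comp R).flip) (s.comp R) (p.comp R)
      ((p.flip.comp R).flip) := by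
  obtain ⟨h1, h2, h3, h4⟩ := h
  have key : ∀ x y : A, R (s x (R y) + s (R x) y + p (R x) y + p x (R y))
      = s (R x) (R y) + p (R x) (R y) := by
    intro x y
    have e : s x (R y) + s (R x) y + p (R x) y + p x (R y)
        = (s (R x) y + s x (R y)) + (p (R x) y + p x (R y)) := by abel
    rw [e, map_add, ← hRs, ← hRp]
  refine ⟨?_, ?_, ?_, ?_, ?_, ?_, ?_, ?_, ?_⟩ <;> intro x y z <;>
    simp only [qR, qM, qN, qW, qNE, qE, qSW, qS, qL,
      LinearMap.flip_apply, LinearMap.comp_apply]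
  · -- qR x y z + qM y x z : uses arM(Ry,x,Rz)+arR(x,Ry,Rz)=0
    rw [key y z]
    have d := h1 (R y) x (R z)
    simp only [arM, arR, map_add, LinearMap.add_apply] at d ⊢
    linear_combination (norm := abel) d
  · -- qR x y z + qR x z y
    rw [key y z, key z y]
    have d := h3 x (R y) (R z)
    simp only [arR, map_add, LinearMap.add_apply] at d ⊢
    linear_combination (norm := abel) d
  · -- qN x y z + qW y x z : arM(x,Ry,Rz)+arR(Ry,x,Rz)=0
    have ey : R (p (R z) y + p z (R y)) = p (R z) (R y) := (hRp z y).symm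
    have e2 : R (p y (R z) + p (R y) z) = p (R y) (R z) := by
      rw [show p y (R z) + p (R y) z = p (R y) z + p y (R z) from by abel]
      exact (hRp y z).symm
    rw [show (p y) (R z) + (p (R y)) z = p y (R z) + p (R y) z from rfl]
    rw [e2]
    have d := h1 x (R y) (R z)
    simp only [arM, arR, map_add, LinearMap.add_apply] at d ⊢
    linear_combination (norm := abel) d
  · -- qN x y z + qNE x z y : arM(x,Ry,Rz)+arL(x,Rz,Ry)=0
    have e2 : R (p y (R z) + p (R y) z) = p (R y) (R z) := by
      rw [show p y (R z) + p (R y) z = p (R y) z + p y (R z) from by abel]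
      exact (hRp y z).symm
    have e3 : R (s z (R y) + s (R z) y) = s (R z) (R y) := by
      rw [show s z (R y) + s (R z) y = s (R z) y + s z (R y) from by abel]
      exact (hRs z y).symm
    rw [e2, e3]
    have d := h2 x (R y) (R z)
    simp only [arM, arL, map_add, LinearMap.add_apply] at d ⊢
    linear_combination (norm := abel) d
  · -- qNE x y z + qE y x z : arL(x,Ry,Rz)+arL(Ry,x,Rz)=0
    have e3 : R (s y (R z) + s (R y) z) = s (R y) (R z) := by
      rw [show s y (R z) + s (R y) z = s (R y) z + s y (R z) from by abel]
      exact (hRs y z).symm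
    rw [e3]
    have d := h4 x (R y) (R z)
    simp only [arL, map_add, LinearMap.add_apply] at d ⊢
    linear_combination (norm := abel) d
  · -- qW x y z + qSW x z y : arR(Rx,y,Rz)+arR(Rx,Rz,y)=0
    have e2 : R (p x (R z) + p (R x) z) = p (R x) (R z) := by
      rw [show p x (R z) + p (R x) z = p (R x) z + p x (R z) from by abel]
      exact (hRp x z).symm
    rw [e2]
    have d := h3 (R x) y (R z)
    simp only [arR, map_add, LinearMap.add_apply] at d ⊢
    linear_combination (norm := abel) d
  · -- qSW x y z + qS y x z : arR(Rx,Ry,z)+arM(Ry,Rx,z)=0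
    have e2 : R (p x (R y) + p (R x) y) = p (R x) (R y) := by
      rw [show p x (R y) + p (R x) y = p (R x) y + p x (R y) from by abel]
      exact (hRp x y).symm
    have e3 : R (s y (R x) + s (R y) x) = s (R y) (R x) := by
      rw [show s y (R x) + s (R y) x = s (R y) x + s y (R x) from by abel]
      exact (hRs y x).symm
    rw [e2, e3]
    have d := h1 (R y) (R x) z
    simp only [arM, arR, map_add, LinearMap.add_apply] at d ⊢
    linear_combination (norm := abel) d
  · -- qM x y z + qL x z y : arM(Rx,y,Rz)+arL(Rx,Rz,y)=0
    rw [key x z]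
    have d := h2 (R x) y (R z)
    simp only [arM, arL, map_add, LinearMap.add_apply] at d ⊢
    linear_combination (norm := abel) d
  · -- qL x y z + qL y x z : arL(Rx,Ry,z)+arL(Ry,Rx,z)=0
    rw [key x y, key y x]
    have d := h4 (R x) (R y) z
    simp only [arL, map_add, LinearMap.add_apply] at d ⊢
    linear_combination (norm := abel) d
end

section
/- Let (A,∗) be an alternative algebra and R₁, R₂ two commuting Rota-Baxter operators of weight zero on A. Then R₂ is a Rota-Baxter operator on the alternative dendriform dialgebra (A, ≺_{R₁}, ≻_{R₁}) where x≺_{R₁}y = x∗R₁(y) and x≻_{R₁}y = R₁(x)∗y. -/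
variable {k A : Type*} [Field k] [CharZero k] [AddCommGroup A] [Module k A]

/-- if `R₁, R₂` are commuting weight-zero Rota-Baxter operators on an
alternative algebra, then `R₂` is a Rota-Baxter operator on the alternative
dendriform dialgebra `(A, ≺_{R₁}, ≻_{R₁})`. -/
theorem stmt14 (mul : A →ₗ[k] A →ₗ[k] A)
    (hAlt1 : ∀ x y z : A, assocE mul x y z + assocE mul y x z = 0)
    (hAlt2 : ∀ x y z : A, assocE mul x y z + assocE mul x z y = 0)
    (R1 R2 : A →ₗ[k] A)
    (hR1 : ∀ x y : A, mul (R1 x) (R1 y) = R1 (mul (R1 x) y + mul x (R1 y)))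
    (hR2 : ∀ x y : A, mul (R2 x) (R2 y) = R2 (mul (R2 x) y + mul x (R2 y)))
    (hcomm : R1.comp R2 = R2.comp R1) :
    ∀ x y : A,
      mul (R1 (R2 x)) (R2 y)
          = R2 (mul (R1 (R2 x)) y + mul (R1 x) (R2 y)) ∧
      mul (R2 x) (R1 (R2 y))
          = R2 (mul (R2 x) (R1 y) + mul x (R1 (R2 y))) := by
  have hc : ∀ a : A, R1 (R2 a) = R2 (R1 a) := fun a => congrArg (fun f => f a) hcomm
  intro x y
  constructor
  · rw [hc x, hR2 (R1 x) y]
  · rw [hc y, hR2 x (R1 y)]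
end

section
/- Let (A,∗) be an alternative algebra with two commuting Rota-Baxter operators R₁, R₂ of weight zero. Then the operations x↗y = R₁(x)∗R₂(y), x↘y = R₁(R₂(x))∗y, x↙y = R₂(x)∗R₁(y), x↖y = x∗R₁(R₂(y)) make A an alternative quadrialgebra. -/
variable {k A : Type*} [Field k] [CharZero k] [AddCommGroup A] [Module k A]

/-- two commuting weight-zero Rota-Baxter operators on an alternative
algebra induce an alternative quadrialgebra via `x↗y = R₁(x)∗R₂(y)`,
`x↘y = R₁(R₂(x))∗y`, `x↙y = R₂(x)∗R₁(y)`, `x↖y = x∗R₁(R₂(y))`. -/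
theorem stmt15 (mul : A →ₗ[k] A →ₗ[k] A)
    (hAlt1 : ∀ x y z : A, assocE mul x y z + assocE mul y x z = 0)
    (hAlt2 : ∀ x y z : A, assocE mul x y z + assocE mul x z y = 0)
    (R1 R2 : A →ₗ[k] A)
    (hR1 : ∀ x y : A, mul (R1 x) (R1 y) = R1 (mul (R1 x) y + mul x (R1 y)))
    (hR2 : ∀ x y : A, mul (R2 x) (R2 y) = R2 (mul (R2 x) y + mul x (R2 y)))
    (hcomm : R1.comp R2 = R2.comp R1) :
    IsAltQuadri (((mul.comp R1).flip.comp R2).flip) (mul.comp (R1.comp R2))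
      (((mul.comp R2).flip.comp R1).flip) ((mul.flip.comp (R1.comp R2)).flip) := by
  have hc : ∀ a : A, R1 (R2 a) = R2 (R1 a) := fun a => by
    have := DFunLike.congr_fun hcomm a
    simpa using this
  have hA1 : ∀ a b c : A,
      mul (mul a b) c - mul a (mul b c) + (mul (mul b a) c - mul b (mul a c)) = 0 :=
    fun a b c => by simpa [assocE] using hAlt1 a b c
  have hA2 : ∀ a b c : A,
      mul (mul a b) c - mul a (mul b c) + (mul (mul a c) b - mul a (mul c b)) = 0 :=
    fun a b c => by simpa [assocE] using hAlt2 a b c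
  have keyA : ∀ x y : A, mul (R1 x) (R1 (R2 y)) =
      R1 (mul (R1 x) (R2 y)) + R1 (mul x (R1 (R2 y))) := fun x y => by
    rw [hR1, map_add]
  have keyD : ∀ x y : A, mul (R1 (R2 x)) (R1 y) =
      R1 (mul (R1 (R2 x)) y) + R1 (mul (R2 x) (R1 y)) := fun x y => by
    rw [hR1, map_add]
  have keyB : ∀ x y : A, mul (R1 (R2 x)) (R2 y) =
      R2 (mul (R1 (R2 x)) y) + R2 (mul (R1 x) (R2 y)) := fun x y => by
    have := hR2 (R1 x) y
    rw [← hc] at this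
    rw [this, map_add, hc]
  have keyC : ∀ x y : A, mul (R2 x) (R1 (R2 y)) =
      R2 (mul (R2 x) (R1 y)) + R2 (mul x (R1 (R2 y))) := fun x y => by
    have := hR2 x (R1 y)
    rw [← hc] at this
    rw [this, map_add]
  have keyT : ∀ y z : A, mul (R1 (R2 y)) (R1 (R2 z)) =
      R1 (R2 (mul (R1 (R2 y)) z)) + R1 (R2 (mul (R1 y) (R2 z)))
        + R1 (R2 (mul (R2 y) (R1 z))) + R1 (R2 (mul y (R1 (R2 z))))
      := fun y z => by
    rw [keyA (R2 y) z, keyB y z, keyC y z, map_add, map_add]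
    abel
  -- lifted versions of the key identities
  have LA : ∀ w x y : A, mul w (mul (R1 x) (R1 (R2 y))) =
      mul w (R1 (mul (R1 x) (R2 y))) + mul w (R1 (mul x (R1 (R2 y)))) := fun w x y => by
    rw [keyA, map_add]
  have RA : ∀ x y w : A, mul (mul (R1 x) (R1 (R2 y))) w =
      mul (R1 (mul (R1 x) (R2 y))) w + mul (R1 (mul x (R1 (R2 y)))) w := fun x y w => by
    rw [keyA, map_add, LinearMap.add_apply]
  have LB : ∀ w x y : A, mul w (mul (R1 (R2 x)) (R2 y)) =
      mul w (R2 (mul (R1 (R2 x)) y)) + mul w (R2 (mul (R1 x) (R2 y))) := fun w x y => by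
    rw [keyB, map_add]
  have RB : ∀ x y w : A, mul (mul (R1 (R2 x)) (R2 y)) w =
      mul (R2 (mul (R1 (R2 x)) y)) w + mul (R2 (mul (R1 x) (R2 y))) w := fun x y w => by
    rw [keyB, map_add, LinearMap.add_apply]
  have LC : ∀ w x y : A, mul w (mul (R2 x) (R1 (R2 y))) =
      mul w (R2 (mul (R2 x) (R1 y))) + mul w (R2 (mul x (R1 (R2 y)))) := fun w x y => by
    rw [keyC, map_add]
  have RC : ∀ x y w : A, mul (mul (R2 x) (R1 (R2 y))) w =
      mul (R2 (mul (R2 x) (R1 y))) w + mul (R2 (mul x (R1 (R2 y)))) w := fun x y w => by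
    rw [keyC, map_add, LinearMap.add_apply]
  have LD : ∀ w x y : A, mul w (mul (R1 (R2 x)) (R1 y)) =
      mul w (R1 (mul (R1 (R2 x)) y)) + mul w (R1 (mul (R2 x) (R1 y))) := fun w x y => by
    rw [keyD, map_add]
  have RD : ∀ x y w : A, mul (mul (R1 (R2 x)) (R1 y)) w =
      mul (R1 (mul (R1 (R2 x)) y)) w + mul (R1 (mul (R2 x) (R1 y))) w := fun x y w => by
    rw [keyD, map_add, LinearMap.add_apply]
  have LT : ∀ w y z : A, mul w (mul (R1 (R2 y)) (R1 (R2 z))) =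
      mul w (R1 (R2 (mul (R1 (R2 y)) z))) + mul w (R1 (R2 (mul (R1 y) (R2 z))))
        + mul w (R1 (R2 (mul (R2 y) (R1 z)))) + mul w (R1 (R2 (mul y (R1 (R2 z)))))
      := fun w y z => by
    rw [keyT, map_add, map_add, map_add]
  have RT : ∀ y z w : A, mul (mul (R1 (R2 y)) (R1 (R2 z))) w =
      mul (R1 (R2 (mul (R1 (R2 y)) z))) w + mul (R1 (R2 (mul (R1 y) (R2 z)))) w
        + mul (R1 (R2 (mul (R2 y) (R1 z)))) w + mul (R1 (R2 (mul y (R1 (R2 z))))) w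
      := fun y z w => by
    rw [keyT, map_add, map_add, map_add]
    simp [LinearMap.add_apply]
  refine ⟨?_, ?_, ?_, ?_, ?_, ?_, ?_, ?_, ?_⟩ <;> intro x y z <;>
    simp only [qR, qL, qNE, qSW, qN, qW, qS, qE, qM, LinearMap.flip_apply,
      LinearMap.coe_comp, Function.comp_apply, map_add, LinearMap.add_apply]
  · linear_combination (norm := module)
      hA1 x (R1 (R2 y)) (R1 (R2 z)) + LT x y z
  · linear_combination (norm := module)
      hA2 x (R1 (R2 y)) (R1 (R2 z)) + LT x y z + LT x z y
  · linear_combination (norm := module)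
      hA1 (R1 x) (R2 y) (R1 (R2 z)) + LC (R1 x) y z + LA (R2 y) x z
  · linear_combination (norm := module)
      hA2 (R1 x) (R2 y) (R1 (R2 z)) + LC (R1 x) y z - RA x z (R2 y) + LB (R1 x) z y
  · linear_combination (norm := module)
      hA1 (R1 x) (R1 (R2 y)) (R2 z) - RA x y (R2 z) + LB (R1 x) y z - RD y x (R2 z)
  · linear_combination (norm := module)
      hA2 (R2 x) (R1 y) (R1 (R2 z)) + LA (R2 x) y z - RC x z (R1 y) + LD (R2 x) z y
  · linear_combination (norm := module)
      hA1 (R2 x) (R1 (R2 y)) (R1 z) - RC x y (R1 z) + LD (R2 x) y z - RB y x (R1 z)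
  · linear_combination (norm := module)
      hA2 (R1 (R2 x)) y (R1 (R2 z)) - RT x z y
  · linear_combination (norm := module)
      hA1 (R1 (R2 x)) (R1 (R2 y)) z - RT x y z - RT y x z
end

section
/- If (M,▶,◀) is an M-dendriform algebra, then the product x·y = x▶y + x◀y makes M a pre-Malcev algebra (the horizontal pre-Malcev algebra). -/
variable {k A : Type*} [Field k] [CharZero k] [AddCommGroup A] [Module k A]

/-- the product `x·y = x▶y + x◀y` of an M-dendriform algebra is
pre-Malcev (the horizontal pre-Malcev algebra). -/
theorem stmt16 (bt bl : A →ₗ[k] A →ₗ[k] A) (h : IsMDend bt bl) :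
    PMid (bt + bl) := by
  obtain ⟨h1, h2, h3, h4⟩ := h
  intro x y z t
  have key : PMe (bt + bl) x y z t =
      MD1e bt bl x y z t + MD2e bt bl x y z t + MD3e bt bl x y z t + MD4e bt bl x y z t := by
    simp only [PMe, MD1e, MD2e, MD3e, MD4e, LinearMap.add_apply, map_add, map_sub,
      LinearMap.sub_apply]
    abel
  rw [key, h1, h2, h3, h4]
  simp
end
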